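/- Let a, b, c, d > 0 and set θ := √((a+c+bd)² − 4abd). Then (a+c+bd)² − 4abd = (a+c−bd)² + 4bcd > 0, and the pair x₀ := (a+c+bd−θ)/(2b), y₀ := (a+c−bd+θ)/(2d) is the unique solution (x, y) with x > 0 and y > 0 of the equilibrium equations a − bx − xy = 0 and c − dy + xy = 0. Moreover x₀ > 0, y₀ > 0 and x₀ < d. -/

import Mathlib

/-!
Adding the two equilibrium equations gives `d y = a + c − b x`, and substituting this back turns
the first equation into `b x² − (a + c + b d) x + a d = 0`, whose discriminant is the quantity under
the root. Of its two roots `(a + c + b d ∓ θ) / (2b)`, the larger one forces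
`2 d y = a + c − b d − θ < 0` because `θ > |a + c − b d|`, so only the smaller one gives a positive
equilibrium.
-/

namespace NOPO

noncomputable section Definitions

variable (a b c d : ℝ)

def IsEquilibrium (x y : ℝ) : Prop :=
  a - b * x - x * y = 0 ∧ c - d * y + x * y = 0

def discr : ℝ :=
  (a + c + b * d) ^ 2 - 4 * a * b * d

/-- With `θ = ±√(discr a b c d)` these are the coordinates of the two equilibria. -/
def equilibriumX (θ : ℝ) : ℝ :=
  (a + c + b * d - θ) / (2 * b)

def equilibriumY (θ : ℝ) : ℝ :=
  (a + c - b * d + θ) / (2 * d)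

end Definitions

variable {a b c d x y θ : ℝ}

theorem discr_eq (a b c d : ℝ) : discr a b c d = (a + c - b * d) ^ 2 + 4 * b * c * d := by
  unfold discr
  ring

theorem discr_pos (hb : 0 < b) (hc : 0 < c) (hd : 0 < d) : 0 < discr a b c d := by
  rw [discr_eq]
  positivity

theorem isEquilibrium_equilibriumX_equilibriumY (hb : b ≠ 0) (hd : d ≠ 0)
    (hθ : θ ^ 2 = discr a b c d) :
    IsEquilibrium a b c d (equilibriumX a b c d θ) (equilibriumY a b c d θ) := by
  unfold IsEquilibrium equilibriumX equilibriumY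
  unfold discr at hθ
  constructor
  · field_simp
    linear_combination hθ
  · field_simp
    linear_combination -hθ

theorem isEquilibrium_iff (hb : b ≠ 0) (hd : d ≠ 0) (hθ : θ ^ 2 = discr a b c d) :
    IsEquilibrium a b c d x y ↔
      (x = equilibriumX a b c d θ ∧ y = equilibriumY a b c d θ) ∨
        (x = equilibriumX a b c d (-θ) ∧ y = equilibriumY a b c d (-θ)) := by
  constructor
  · rintro ⟨h₁, h₂⟩
    have hy : d * y = a + c - b * x := by linear_combination -h₁ - h₂
    have hquad : b * x ^ 2 - (a + c + b * d) * x + a * d = 0 := by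
      linear_combination x * hy + d * h₁
    have hroots : (2 * b * x - (a + c + b * d - θ)) * (2 * b * x - (a + c + b * d + θ)) = 0 := by
      unfold discr at hθ
      linear_combination 4 * b * hquad - hθ
    unfold equilibriumX equilibriumY
    rw [eq_div_iff (mul_ne_zero two_ne_zero hb), eq_div_iff (mul_ne_zero two_ne_zero hd),
      eq_div_iff (mul_ne_zero two_ne_zero hb), eq_div_iff (mul_ne_zero two_ne_zero hd)]
    rcases mul_eq_zero.mp hroots with h | h
    · left
      constructor <;> linarith
    · right
      constructor <;> linarith
  · have hθ' : (-θ) ^ 2 = discr a b c d := by rwa [neg_sq]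
    rintro (⟨rfl, rfl⟩ | ⟨rfl, rfl⟩)
    · exact isEquilibrium_equilibriumX_equilibriumY hb hd hθ
    · exact isEquilibrium_equilibriumX_equilibriumY hb hd hθ'

theorem abs_lt_sqrt_discr (hb : 0 < b) (hc : 0 < c) (hd : 0 < d) :
    |a + c - b * d| < √(discr a b c d) := by
  rw [Real.lt_sqrt (abs_nonneg _), sq_abs, discr_eq]
  have : 0 < 4 * b * c * d := by positivity
  linarith

theorem sqrt_discr_lt (ha : 0 < a) (hb : 0 < b) (hc : 0 < c) (hd : 0 < d) :
    √(discr a b c d) < a + c + b * d := by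
  rw [Real.sqrt_lt' (by positivity), discr]
  have : 0 < 4 * a * b * d := by positivity
  linarith

theorem equilibriumX_sqrt_discr_pos (ha : 0 < a) (hb : 0 < b) (hc : 0 < c) (hd : 0 < d) :
    0 < equilibriumX a b c d √(discr a b c d) :=
  div_pos (sub_pos.mpr (sqrt_discr_lt ha hb hc hd)) (by positivity)

theorem equilibriumY_sqrt_discr_pos (hb : 0 < b) (hc : 0 < c) (hd : 0 < d) :
    0 < equilibriumY a b c d √(discr a b c d) := by
  have := (abs_lt_sqrt_discr hb hc hd).trans_le' (neg_le_abs (a + c - b * d))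
  exact div_pos (by linarith) (by positivity)

theorem equilibriumY_neg_sqrt_discr_neg (hb : 0 < b) (hc : 0 < c) (hd : 0 < d) :
    equilibriumY a b c d (-√(discr a b c d)) < 0 := by
  have := (abs_lt_sqrt_discr hb hc hd).trans_le' (le_abs_self (a + c - b * d))
  exact div_neg_of_neg_of_pos (by linarith) (by positivity)

theorem equilibriumX_sqrt_discr_lt (hb : 0 < b) (hc : 0 < c) (hd : 0 < d) :
    equilibriumX a b c d √(discr a b c d) < d := by
  have := (abs_lt_sqrt_discr hb hc hd).trans_le' (le_abs_self (a + c - b * d))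
  rw [equilibriumX, div_lt_iff₀ (by positivity)]
  linarith

end NOPO

open NOPO in
theorem stmt_1 (a b c d : ℝ) (ha : 0 < a) (hb : 0 < b) (hc : 0 < c) (hd : 0 < d) :
    (a + c + b * d) ^ 2 - 4 * a * b * d = (a + c - b * d) ^ 2 + 4 * b * c * d ∧
    0 < (a + c + b * d) ^ 2 - 4 * a * b * d ∧
    (let θ := Real.sqrt ((a + c + b * d) ^ 2 - 4 * a * b * d)
     let x₀ := (a + c + b * d - θ) / (2 * b)
     let y₀ := (a + c - b * d + θ) / (2 * d)
     0 < x₀ ∧ 0 < y₀ ∧ x₀ < d ∧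
     a - b * x₀ - x₀ * y₀ = 0 ∧ c - d * y₀ + x₀ * y₀ = 0 ∧
     ∀ x y : ℝ, 0 < x → 0 < y → a - b * x - x * y = 0 → c - d * y + x * y = 0 →
       x = x₀ ∧ y = y₀) := by
  have hθ : √(discr a b c d) ^ 2 = discr a b c d := Real.sq_sqrt (discr_pos hb hc hd).le
  have hb₀ := hb.ne'
  have hd₀ := hd.ne'
  obtain ⟨h₁, h₂⟩ := isEquilibrium_equilibriumX_equilibriumY hb₀ hd₀ hθ
  refine ⟨discr_eq a b c d, discr_pos hb hc hd, equilibriumX_sqrt_discr_pos ha hb hc hd,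
    equilibriumY_sqrt_discr_pos hb hc hd, equilibriumX_sqrt_discr_lt hb hc hd, h₁, h₂,
    fun x y _ hy h₁ h₂ => ?_⟩
  rcases (isEquilibrium_iff hb₀ hd₀ hθ).mp ⟨h₁, h₂⟩ with h | ⟨-, rfl⟩
  · exact h
  · exact absurd hy (equilibriumY_neg_sqrt_discr_neg hb hc hd).not_gt
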